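/- arXiv:2306.14046 — 5 statements merged into one kernel-verified Lean document; each statement's English description precedes it below -/
import Mathlib

section
/- The group SL₂(ℤ/pℤ) for an odd prime p has exactly p + 4 conjugacy classes. -/
open Polynomial

variable {p : ℕ} [Fact p.Prime]

lemma card_odd (hp : p ≠ 2) : Fintype.card (ZMod p) % 2 = 1 := by
  rw [ZMod.card]
  exact Nat.odd_iff.mp ((Fact.out : p.Prime).odd_of_ne_two hp)

lemma diag_represents (hp : p ≠ 2) (a c e : ZMod p) (ha : a ≠ 0) (hc : c ≠ 0) :
    ∃ x y : ZMod p, a * x ^ 2 + c * y ^ 2 = e := by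
  have h2 : ((2 : ℕ) : WithBot ℕ) = (2 : WithBot ℕ) := by norm_cast
  have hf : degree (C a * X ^ 2) = 2 := by rw [degree_C_mul_X_pow _ ha]; exact h2
  have hdc : degree (C c * X ^ 2) = 2 := by rw [degree_C_mul_X_pow _ hc]; exact h2
  have hg : degree (C c * X ^ 2 - C e) = 2 := by
    rw [sub_eq_add_neg, ← C_neg]
    rcases eq_or_ne e 0 with rfl | he
    · simpa using hdc
    · rw [degree_add_eq_left_of_degree_lt, hdc]
      rw [hdc, degree_C (neg_ne_zero.mpr he)]
      norm_num
  obtain ⟨x, y, hxy⟩ := FiniteField.exists_root_sum_quadratic hf hg (card_odd hp)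
  refine ⟨x, y, ?_⟩
  simp only [eval_add, eval_mul, eval_pow, eval_C, eval_X, eval_sub] at hxy
  linear_combination hxy

lemma zmod_two_ne_zero (hp : p ≠ 2) : (2 : ZMod p) ≠ 0 := by
  have h : ((2 : ℕ) : ZMod p) ≠ 0 := by
    rw [Ne, ZMod.natCast_eq_zero_iff]
    exact fun h => hp ((Nat.prime_dvd_prime_iff_eq Fact.out Nat.prime_two).mp h)
  simpa using h

lemma quad_represents_aux (hp : p ≠ 2) (a b c e : ZMod p) (ha : a ≠ 0)
    (hd : b ^ 2 - 4 * (a * c) ≠ 0) :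
    ∃ x y : ZMod p, a * x ^ 2 + b * (x * y) + c * y ^ 2 = e := by
  have h2 : (2 : ZMod p) ≠ 0 := zmod_two_ne_zero hp
  obtain ⟨u, y, huy⟩ := diag_represents hp 1 (4 * (a * c) - b ^ 2) (4 * a * e)
    one_ne_zero (by intro h; exact hd (by linear_combination -h))
  refine ⟨(u - b * y) * (2 * a)⁻¹, y, ?_⟩
  have h2a : (2 * a) ≠ 0 := mul_ne_zero h2 ha
  field_simp
  linear_combination huy

lemma quad_represents (hp : p ≠ 2) (a b c e : ZMod p) (hd : b ^ 2 - 4 * (a * c) ≠ 0) :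
    ∃ x y : ZMod p, a * x ^ 2 + b * (x * y) + c * y ^ 2 = e := by
  rcases eq_or_ne a 0 with rfl | ha
  · rcases eq_or_ne c 0 with rfl | hc
    · have hb : b ≠ 0 := by
        intro h; apply hd; rw [h]; ring
      exact ⟨e * b⁻¹, 1, by field_simp; ring⟩
    · obtain ⟨y, x, h⟩ := quad_represents_aux hp c b 0 e hc (by
        intro h; apply hd; linear_combination h)
      exact ⟨x, y, by linear_combination h⟩
  · exact quad_represents_aux hp a b c e ha hd

open Matrix

variable (p) in
abbrev SLtwo := Matrix.SpecialLinearGroup (Fin 2) (ZMod p)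

def mk2 (a b c d : ZMod p) (h : a * d - b * c = 1) : SLtwo p :=
  ⟨!![a, b; c, d], by rw [Matrix.det_fin_two_of]; linear_combination h⟩

@[simp] lemma mk2_coe (a b c d : ZMod p) (h) : (mk2 a b c d h).1 = !![a, b; c, d] := rfl

lemma detSL (A : SLtwo p) : A.1 0 0 * A.1 1 1 - A.1 0 1 * A.1 1 0 = 1 := by
  have := A.2
  rwa [Matrix.det_fin_two] at this

lemma isConj_of_semiconj (g A B : SLtwo p) (h : g.1 * A.1 = B.1 * g.1) : IsConj A B := by
  rw [isConj_iff]
  refine ⟨g, ?_⟩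
  have hg : g * A = B * g := Subtype.ext (by simpa using h)
  rw [hg, mul_inv_cancel_right]

def dval (m : Matrix (Fin 2) (Fin 2) (ZMod p)) : ZMod p :=
  if m 1 0 ≠ 0 then m 1 0 else -(m 0 1)

noncomputable def kval (m : Matrix (Fin 2) (Fin 2) (ZMod p)) : Fin 3 :=
  if m = 1 then 0 else if IsSquare (dval m) then 1 else 2

variable (p) in
@[reducible] def Xt := {t : ZMod p // t ^ 2 - 4 ≠ 0} ⊕ (Bool × Fin 3)

noncomputable def inv2 (A : SLtwo p) : Xt p :=
  if h : (A.1 0 0 + A.1 1 1) ^ 2 - 4 ≠ 0 then .inl ⟨_, h⟩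
  else .inr (if A.1 0 0 + A.1 1 1 = -2 then (true, kval (-A.1)) else (false, kval A.1))

lemma zmod_four_ne_zero (hp : p ≠ 2) : (4 : ZMod p) ≠ 0 := by
  have h2 := zmod_two_ne_zero hp
  intro h
  exact h2 (by have : (2 : ZMod p) * 2 = 0 := by linear_combination h
               rcases mul_eq_zero.mp this with h' | h' <;> exact h')

lemma card_Xt (hp : p ≠ 2) : Nat.card (Xt p) = p + 4 := by
  have hp2 : 2 ≤ p := (Fact.out : p.Prime).two_le
  have h24 : (2 : ZMod p) ≠ -2 := by
    intro h
    exact zmod_four_ne_zero hp (by linear_combination h)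
  have hcard2 : Fintype.card {t : ZMod p // t ^ 2 - 4 = 0} = 2 := by
    rw [Fintype.card_subtype]
    have : Finset.filter (fun t : ZMod p => t ^ 2 - 4 = 0) Finset.univ = {2, -2} := by
      ext t
      simp only [Finset.mem_filter, Finset.mem_univ, true_and, Finset.mem_insert,
        Finset.mem_singleton]
      constructor
      · intro h
        have : (t - 2) * (t + 2) = 0 := by linear_combination h
        rcases mul_eq_zero.mp this with h' | h'
        · left; linear_combination h'
        · right; linear_combination h'
      · rintro (rfl | rfl) <;> ring
    rw [this]
    rw [Finset.card_insert_of_notMem (by simpa using h24), Finset.card_singleton]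
  have hsub : Fintype.card {t : ZMod p // t ^ 2 - 4 ≠ 0} = p - 2 := by
    have := Fintype.card_subtype_compl (fun t : ZMod p => t ^ 2 - 4 = 0)
    rw [hcard2, ZMod.card] at this
    exact this
  rw [Nat.card_eq_fintype_card]
  unfold Xt
  rw [Fintype.card_sum, hsub, Fintype.card_prod, Fintype.card_bool, Fintype.card_fin]
  omega

lemma isSquare_mul_sq_iff (u t : ZMod p) (ht : t ≠ 0) : IsSquare (u * t ^ 2) ↔ IsSquare u := by
  constructor
  · rintro ⟨r, hr⟩
    refine ⟨r * t⁻¹, ?_⟩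
    field_simp
    linear_combination hr
  · rintro ⟨r, hr⟩
    exact ⟨r * t, by rw [hr]; ring⟩

lemma isSquare_iff_of_mul_sq {u v s : ZMod p} (hu : u ≠ 0) (hs : s ≠ 0)
    (h : u * v = s ^ 2) : (IsSquare v ↔ IsSquare u) := by
  have hv : v = u * (s * u⁻¹) ^ 2 := by
    field_simp
    linear_combination h
  rw [hv]
  exact isSquare_mul_sq_iff u _ (by
    apply mul_ne_zero hs
    exact inv_ne_zero hu)

lemma nonsquare_mul_nonsquare {u v : ZMod p} (hu : u ≠ 0) (hv : v ≠ 0)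
    (h1 : ¬IsSquare u) (h2 : ¬IsSquare v) : IsSquare (u * v) := by
  have c1 : quadraticChar (ZMod p) u = -1 := quadraticChar_neg_one_iff_not_isSquare.mpr h1
  have c2 : quadraticChar (ZMod p) v = -1 := quadraticChar_neg_one_iff_not_isSquare.mpr h2
  have : quadraticChar (ZMod p) (u * v) = 1 := by rw [_root_.map_mul, c1, c2]; ring
  exact (quadraticChar_one_iff_isSquare (mul_ne_zero hu hv)).mp this

-- for a trace-2, det-1 matrix with lower-left entry zero, diagonal is (1,1)
lemma trace_two_entries {m : Matrix (Fin 2) (Fin 2) (ZMod p)}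
    (ht : m 0 0 + m 1 1 = 2) (hd : m.det = 1) (hc : m 1 0 = 0) :
    m 0 0 = 1 ∧ m 1 1 = 1 := by
  rw [Matrix.det_fin_two] at hd
  have h : (m 0 0 - 1) ^ 2 = 0 := by linear_combination m 0 0 * ht - hd - m 0 1 * hc
  have h1 : m 0 0 = 1 := by
    have := pow_eq_zero_iff (n := 2) (by norm_num) |>.mp h
    linear_combination this
  exact ⟨h1, by linear_combination ht - h1⟩

lemma eq_one_iff (m : Matrix (Fin 2) (Fin 2) (ZMod p)) :
    m = 1 ↔ m 0 0 = 1 ∧ m 0 1 = 0 ∧ m 1 0 = 0 ∧ m 1 1 = 1 := by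
  constructor
  · rintro rfl
    simp [Matrix.one_fin_two]
  · rintro ⟨h1, h2, h3, h4⟩
    rw [Matrix.eta_fin_two m, h1, h2, h3, h4, Matrix.one_fin_two]

lemma dval_ne_zero {m : Matrix (Fin 2) (Fin 2) (ZMod p)}
    (ht : m 0 0 + m 1 1 = 2) (hd : m.det = 1) (hm : m ≠ 1) : dval m ≠ 0 := by
  unfold dval
  split_ifs with h
  · exact h
  · push_neg at h
    obtain ⟨h1, h4⟩ := trace_two_entries ht hd h
    intro hb
    exact hm ((eq_one_iff m).mpr ⟨h1, by linear_combination -hb, h, h4⟩)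

lemma bc_rel {m : Matrix (Fin 2) (Fin 2) (ZMod p)}
    (ht : m 0 0 + m 1 1 = 2) (hd : m.det = 1) :
    m 0 1 * m 1 0 = -(m 0 0 - 1) ^ 2 := by
  rw [Matrix.det_fin_two] at hd
  linear_combination m 0 0 * ht - hd

lemma inv_coe (g : SLtwo p) :
    (g⁻¹ : SLtwo p).1 = !![g.1 1 1, -(g.1 0 1); -(g.1 1 0), g.1 0 0] := by
  rw [Matrix.SpecialLinearGroup.SL2_inv_expl]
  rfl

lemma kval_conj (g : SLtwo p) (m : Matrix (Fin 2) (Fin 2) (ZMod p))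
    (ht : m 0 0 + m 1 1 = 2) (hd : m.det = 1) :
    kval (g.1 * m * (g⁻¹ : SLtwo p).1) = kval m := by
  have hgig : ((g⁻¹ : SLtwo p)).1 * g.1 = 1 := by
    rw [← Matrix.SpecialLinearGroup.coe_mul, inv_mul_cancel,
      Matrix.SpecialLinearGroup.coe_one]
  have hggi : g.1 * ((g⁻¹ : SLtwo p)).1 = 1 := by
    rw [← Matrix.SpecialLinearGroup.coe_mul, mul_inv_cancel,
      Matrix.SpecialLinearGroup.coe_one]
  set B := g.1 * m * (g⁻¹ : SLtwo p).1 with hB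
  have htrB : Matrix.trace B = Matrix.trace m := by
    rw [hB, Matrix.trace_mul_comm, ← mul_assoc, hgig, one_mul]
  have hBt : B 0 0 + B 1 1 = 2 := by
    rw [Matrix.trace_fin_two, Matrix.trace_fin_two] at htrB
    rw [htrB]; exact ht
  have hBd : B.det = 1 := by
    rw [hB, Matrix.det_mul, Matrix.det_mul, g.2, hd, (g⁻¹ : SLtwo p).2]
    ring
  rcases eq_or_ne m 1 with rfl | hm
  · have hB1 : B = 1 := by rw [hB, mul_one, hggi]
    rw [hB1]
  · have hB1 : B ≠ 1 := by
      intro h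
      apply hm
      have : (g⁻¹ : SLtwo p).1 * B * g.1 = m := by
        rw [hB, ← mul_assoc, ← mul_assoc, hgig, one_mul, mul_assoc, hgig, mul_one]
      rw [h, mul_one, hgig] at this
      exact this.symm
    have hdm : dval m ≠ 0 := dval_ne_zero ht hd hm
    have hdB : dval B ≠ 0 := dval_ne_zero hBt hBd hB1
    have key : ∃ s : ZMod p, dval m * dval B = s ^ 2 := by
      have hbc : m 0 1 * m 1 0 = -(m 0 0 - 1) ^ 2 := bc_rel ht hd
      have hB10 : B 1 0 = m 1 0 * (g.1 1 1) ^ 2 + 2 * (m 0 0 - 1) * (g.1 1 1 * g.1 1 0)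
          - m 0 1 * (g.1 1 0) ^ 2 := by
        rw [hB, inv_coe]
        simp [Matrix.mul_apply, Fin.sum_univ_two]
        linear_combination (-(g.1 1 0 * g.1 1 1)) * ht
      have hB01 : B 0 1 = -(m 1 0 * (g.1 0 1) ^ 2 + 2 * (m 0 0 - 1) * (g.1 0 1 * g.1 0 0)
          - m 0 1 * (g.1 0 0) ^ 2) := by
        rw [hB, inv_coe]
        simp [Matrix.mul_apply, Fin.sum_univ_two]
        linear_combination (g.1 0 0 * g.1 0 1) * ht
      unfold dval
      split_ifs with h1 h2 h2
      · -- dval m = m 1 0, dval B = B 1 0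
        exact ⟨m 1 0 * g.1 1 1 + (m 0 0 - 1) * g.1 1 0, by
          rw [hB10]; linear_combination (-(g.1 1 0 ^ 2)) * hbc⟩
      · -- dval B = -(B 0 1)
        exact ⟨m 1 0 * g.1 0 1 + (m 0 0 - 1) * g.1 0 0, by
          rw [hB01]; linear_combination (-(g.1 0 0 ^ 2)) * hbc⟩
      · -- m 1 0 = 0, B 1 0 ≠ 0
        push_neg at h1
        obtain ⟨ha, _⟩ := trace_two_entries ht hd h1
        exact ⟨m 0 1 * g.1 1 0, by
          rw [hB10, h1, ha]; ring⟩
      · push_neg at h1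
        obtain ⟨ha, _⟩ := trace_two_entries ht hd h1
        exact ⟨m 0 1 * g.1 0 0, by
          rw [hB01, h1, ha]; ring⟩
    obtain ⟨s, hs⟩ := key
    have hsne : s ≠ 0 := by
      intro h
      rw [h] at hs
      exact mul_ne_zero hdm hdB (by simpa using hs)
    have hiff := isSquare_iff_of_mul_sq hdm hsne hs
    unfold kval
    rw [if_neg hB1, if_neg hm]
    by_cases hsq : IsSquare (dval m)
    · rw [if_pos hsq, if_pos (hiff.mpr hsq)]
    · rw [if_neg hsq, if_neg (fun h => hsq (hiff.mp h))]

lemma isConj_of_semiconj' (g A B : SLtwo p) (h : A.1 * g.1 = g.1 * B.1) : IsConj A B := by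
  rw [isConj_iff]
  refine ⟨g⁻¹, ?_⟩
  have hg : A * g = g * B := Subtype.ext (by simpa using h)
  rw [inv_inv, mul_assoc, hg, ← mul_assoc, inv_mul_cancel, one_mul]

def companion (t : ZMod p) : SLtwo p := mk2 0 (-1) 1 t (by ring)

lemma conj_companion (hp : p ≠ 2) (A : SLtwo p)
    (hA : (A.1 0 0 + A.1 1 1) ^ 2 - 4 ≠ 0) :
    IsConj A (companion (A.1 0 0 + A.1 1 1)) := by
  have hdet := detSL A
  set a := A.1 0 0; set b := A.1 0 1; set c := A.1 1 0; set d := A.1 1 1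
  have hdisc : (d - a) ^ 2 - 4 * (c * (-b)) ≠ 0 := by
    intro h
    apply hA
    linear_combination h + 4 * hdet
  obtain ⟨α, β, hD⟩ := quad_represents hp c (d - a) (-b) 1 hdisc
  refine isConj_of_semiconj' (mk2 α (a * α + b * β) β (c * α + d * β)
    (by linear_combination hD)) A _ ?_
  rw [Matrix.eta_fin_two A.1]
  show !![a, b; c, d] * _ = _
  rw [mk2_coe]
  unfold companion
  rw [mk2_coe, Matrix.mul_fin_two, Matrix.mul_fin_two]
  ext i j
  fin_cases i <;> fin_cases j <;> simp
  · linear_combination (-α) * hdet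
  · linear_combination (-β) * hdet

def Lmat (e : ZMod p) : SLtwo p := mk2 1 0 e 1 (by ring)

lemma Lmat_trace (e : ZMod p) : (Lmat e).1 0 0 + (Lmat e).1 1 1 = 2 := by
  unfold Lmat; rw [mk2_coe]; norm_num

lemma conj_L_scale (e s : ZMod p) (hs : s ≠ 0) : IsConj (Lmat e) (Lmat (e * s ^ 2)) := by
  have hss : s⁻¹ * s - 0 * 0 = 1 := by field_simp; ring
  refine isConj_of_semiconj (mk2 s⁻¹ 0 0 s hss) _ _ ?_
  unfold Lmat
  rw [mk2_coe, mk2_coe, mk2_coe, Matrix.mul_fin_two, Matrix.mul_fin_two]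
  ext i j
  fin_cases i <;> fin_cases j <;> simp
  · field_simp

lemma conj_to_L (A : SLtwo p) (ht : A.1 0 0 + A.1 1 1 = 2) (hA : A ≠ 1) :
    IsConj A (Lmat (dval A.1)) := by
  have hdet := detSL A
  have hdet' : (A.1).det = 1 := A.2
  by_cases hc : A.1 1 0 ≠ 0
  · have hdv : dval A.1 = A.1 1 0 := if_pos hc
    have hbc := bc_rel ht hdet'
    set a := A.1 0 0; set b := A.1 0 1; set c := A.1 1 0; set d := A.1 1 1
    refine isConj_of_semiconj' (mk2 1 ((a - 1) * c⁻¹) 0 1 (by ring)) A _ ?_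
    rw [hdv]
    rw [Matrix.eta_fin_two A.1]
    show !![a, b; c, d] * _ = _
    simp only [Lmat, mk2_coe]
    rw [Matrix.mul_fin_two, Matrix.mul_fin_two]
    ext i j
    have hci : c * c⁻¹ = 1 := mul_inv_cancel₀ hc
    fin_cases i <;> fin_cases j <;> simp <;> field_simp
    · ring
    · linear_combination hbc
    · linear_combination ht
  · push_neg at hc
    obtain ⟨ha, hd⟩ := trace_two_entries ht hdet' hc
    have hdv : dval A.1 = -(A.1 0 1) := by unfold dval; rw [if_neg (by simpa using hc)]
    refine isConj_of_semiconj (mk2 0 (-1) 1 0 (by ring)) A _ ?_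
    rw [hdv, Matrix.eta_fin_two A.1, ha, hd, hc]
    simp only [Lmat, mk2_coe]
    rw [Matrix.mul_fin_two, Matrix.mul_fin_two]
    ext i j
    fin_cases i <;> fin_cases j <;> simp

def negSL (A : SLtwo p) : SLtwo p := ⟨-A.1, by rw [Matrix.det_neg]; simp [A.2]⟩

lemma isConj_of_negSL {A B : SLtwo p} (h : IsConj (negSL A) (negSL B)) : IsConj A B := by
  rw [isConj_iff] at h ⊢
  obtain ⟨g, hg⟩ := h
  refine ⟨g, ?_⟩
  apply Subtype.ext
  have := congrArg (fun M : SLtwo p => M.1) hg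
  simp only [Matrix.SpecialLinearGroup.coe_mul] at this ⊢
  have h2 : g.1 * (negSL A).1 * (g⁻¹ : SLtwo p).1 = -(g.1 * A.1 * (g⁻¹ : SLtwo p).1) := by
    show g.1 * (-A.1) * _ = _
    rw [mul_neg, neg_mul]
  rw [h2] at this
  have : g.1 * A.1 * (g⁻¹ : SLtwo p).1 = B.1 := by
    have hB : (negSL B).1 = -B.1 := rfl
    rw [hB] at this
    exact neg_injective this
  exact this

lemma coe_inv_mul (g : SLtwo p) : ((g⁻¹ : SLtwo p)).1 * g.1 = 1 := by
  rw [← Matrix.SpecialLinearGroup.coe_mul, inv_mul_cancel, Matrix.SpecialLinearGroup.coe_one]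

lemma trace_conj_SL (g A : SLtwo p) :
    (g * A * g⁻¹ : SLtwo p).1 0 0 + (g * A * g⁻¹ : SLtwo p).1 1 1
      = A.1 0 0 + A.1 1 1 := by
  have h : Matrix.trace ((g * A * g⁻¹ : SLtwo p)).1 = Matrix.trace A.1 := by
    simp only [Matrix.SpecialLinearGroup.coe_mul]
    rw [Matrix.trace_mul_comm, ← mul_assoc, coe_inv_mul, one_mul]
  rwa [Matrix.trace_fin_two, Matrix.trace_fin_two] at h

lemma det_neg_one' (m : Matrix (Fin 2) (Fin 2) (ZMod p)) (h : m.det = 1) : (-m).det = 1 := by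
  rw [Matrix.det_neg]; simp [h]

lemma trace_eq_two {t : ZMod p} (h : ¬(t ^ 2 - 4 ≠ 0)) (h2 : t ≠ -2) : t = 2 := by
  push_neg at h
  have hf : (t - 2) * (t + 2) = 0 := by linear_combination h
  rcases mul_eq_zero.mp hf with h' | h'
  · linear_combination h'
  · exact absurd (by linear_combination h') h2

lemma inv2_isConj {A B : SLtwo p} (h : IsConj A B) : inv2 A = inv2 B := by
  rw [isConj_iff] at h
  obtain ⟨g, rfl⟩ := h
  have htr := trace_conj_SL g A
  unfold inv2
  rw [htr]
  split_ifs with h1 h2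
  · rfl
  · have e : -((g * A * g⁻¹ : SLtwo p)).1 = g.1 * (-A.1) * (g⁻¹ : SLtwo p).1 := by
      simp only [Matrix.SpecialLinearGroup.coe_mul, neg_mul, mul_neg]
    have ht' : (-A.1) 0 0 + (-A.1) 1 1 = 2 := by
      simp only [Matrix.neg_apply]
      linear_combination -h2
    rw [e, kval_conj g (-A.1) ht' (det_neg_one' A.1 A.2)]
  · have ht' : A.1 0 0 + A.1 1 1 = 2 := trace_eq_two h1 h2
    have e : ((g * A * g⁻¹ : SLtwo p)).1 = g.1 * A.1 * (g⁻¹ : SLtwo p).1 := by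
      simp only [Matrix.SpecialLinearGroup.coe_mul]
    rw [e, kval_conj g A.1 ht' A.2]

lemma kval_eq_zero_iff (m : Matrix (Fin 2) (Fin 2) (ZMod p)) : kval m = 0 ↔ m = 1 := by
  unfold kval
  split_ifs with h h2
  · simp [h]
  · simp [h]
  · simp [h]

lemma conj_of_trace2 (A B : SLtwo p) (htA : A.1 0 0 + A.1 1 1 = 2)
    (htB : B.1 0 0 + B.1 1 1 = 2) (hk : kval A.1 = kval B.1) : IsConj A B := by
  rcases eq_or_ne A 1 with rfl | hA1
  · have h1 : kval ((1 : SLtwo p)).1 = 0 := by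
      rw [(kval_eq_zero_iff _)]
      exact Matrix.SpecialLinearGroup.coe_one
    rw [h1] at hk
    have hB' : B.1 = 1 := (kval_eq_zero_iff _).mp hk.symm
    have hB1 : B = (1 : SLtwo p) := by
      apply Subtype.ext
      rw [hB']
      exact Matrix.SpecialLinearGroup.coe_one.symm
    rw [hB1]
  · have hA1' : A.1 ≠ 1 := fun h => hA1 (Subtype.ext h)
    have hB1 : B ≠ 1 := by
      intro hB
      apply hA1'
      rw [← kval_eq_zero_iff, hk, hB, kval_eq_zero_iff]
      exact Matrix.SpecialLinearGroup.coe_one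
    have hB1' : B.1 ≠ 1 := fun h => hB1 (Subtype.ext h)
    have hdA : dval A.1 ≠ 0 := dval_ne_zero htA A.2 hA1'
    have hdB : dval B.1 ≠ 0 := dval_ne_zero htB B.2 hB1'
    have cA := conj_to_L A htA hA1
    have cB := conj_to_L B htB hB1
    suffices hs : ∃ s : ZMod p, s ≠ 0 ∧ dval B.1 = dval A.1 * s ^ 2 by
      obtain ⟨s, hs0, hseq⟩ := hs
      have := conj_L_scale (dval A.1) s hs0
      rw [← hseq] at this
      exact (cA.trans this).trans cB.symm
    unfold kval at hk
    rw [if_neg hA1', if_neg hB1'] at hk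
    split_ifs at hk with hsA hsB hsB
    · obtain ⟨r, hr⟩ := hsA
      obtain ⟨r', hr'⟩ := hsB
      have hrne : r ≠ 0 := by rintro rfl; simp at hr; exact hdA hr
      refine ⟨r' * r⁻¹, ?_, ?_⟩
      · have hr'ne : r' ≠ 0 := by rintro rfl; simp at hr'; exact hdB hr'
        exact mul_ne_zero hr'ne (inv_ne_zero hrne)
      · rw [hr, hr']
        field_simp
    · exact absurd hk (by decide)
    · exact absurd hk (by decide)
    · have hsq := nonsquare_mul_nonsquare hdA hdB hsA hsB
      obtain ⟨s, hs⟩ := (isSquare_iff_exists_sq _).mp hsq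
      have hs0 : s ≠ 0 := by
        rintro rfl
        exact mul_ne_zero hdA hdB (by simpa using hs.symm)
      refine ⟨s * (dval A.1)⁻¹, mul_ne_zero hs0 (inv_ne_zero hdA), ?_⟩
      field_simp
      linear_combination hs

lemma negSL_trace (A : SLtwo p) (h : A.1 0 0 + A.1 1 1 = -2) :
    (negSL A).1 0 0 + (negSL A).1 1 1 = 2 := by
  show (-A.1) 0 0 + (-A.1) 1 1 = 2
  simp only [Matrix.neg_apply]
  linear_combination -h

lemma conj_of_inv2_eq (hp : p ≠ 2) (A B : SLtwo p) (h : inv2 A = inv2 B) : IsConj A B := by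
  unfold inv2 at h
  split_ifs at h with h1 h2 h3 h4 h5 h6 h7 h8 h9 h10
  any_goals simp at h
  · have cA := conj_companion hp A h1
    have cB := conj_companion hp B h2
    rw [h] at cA
    exact cA.trans cB.symm
  · exact isConj_of_negSL (conj_of_trace2 _ _ (negSL_trace A h3) (negSL_trace B h5) h)
  · exact conj_of_trace2 A B (trace_eq_two h1 h3) (trace_eq_two h6 h7) h

lemma two_ne_neg_two (hp : p ≠ 2) : (2 : ZMod p) ≠ -2 := fun h =>
  zmod_four_ne_zero hp (by linear_combination h)

lemma inv2_of_trace_two (hp : p ≠ 2) (A : SLtwo p) (ht : A.1 0 0 + A.1 1 1 = 2) :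
    inv2 A = Sum.inr (false, kval A.1) := by
  unfold inv2
  rw [ht, dif_neg (by push_neg; ring), if_neg (two_ne_neg_two hp)]

lemma inv2_negSL (hp : p ≠ 2) (A : SLtwo p) (ht : A.1 0 0 + A.1 1 1 = 2) :
    inv2 (negSL A) = Sum.inr (true, kval A.1) := by
  have htr : (negSL A).1 0 0 + (negSL A).1 1 1 = -2 := by
    show (-A.1) 0 0 + (-A.1) 1 1 = -2
    simp only [Matrix.neg_apply]
    linear_combination -ht
  have hnn : -((negSL A)).1 = A.1 := neg_neg A.1
  unfold inv2
  rw [htr, dif_neg (by push_neg; ring), if_pos rfl, hnn]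

lemma kval_one : kval ((1 : SLtwo p)).1 = 0 := by
  rw [kval_eq_zero_iff]
  exact Matrix.SpecialLinearGroup.coe_one

lemma trace_one : ((1 : SLtwo p)).1 0 0 + ((1 : SLtwo p)).1 1 1 = 2 := by
  rw [Matrix.SpecialLinearGroup.coe_one]
  norm_num [Matrix.one_apply]

lemma kval_Lmat (e : ZMod p) (he : e ≠ 0) :
    kval (Lmat e).1 = if IsSquare e then 1 else 2 := by
  have h10 : (Lmat e).1 1 0 = e := by simp [Lmat]
  have h1 : (Lmat e).1 ≠ 1 := by
    intro h
    obtain ⟨-, -, h3, -⟩ := (eq_one_iff _).mp h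
    rw [h10] at h3
    exact he h3
  have hdv : dval (Lmat e).1 = e := by
    unfold dval
    rw [h10, if_pos he]
  unfold kval
  rw [if_neg h1, hdv]

lemma inv2_surj (hp : p ≠ 2) (x : Xt p) : ∃ A : SLtwo p, inv2 A = x := by
  obtain ⟨t, ht⟩ | ⟨bl, k⟩ := x
  · refine ⟨companion t, ?_⟩
    have htr : (companion t).1 0 0 + (companion t).1 1 1 = t := by
      simp [companion]
    unfold inv2
    rw [htr, dif_pos ht]
  · obtain ⟨ν, hν⟩ := FiniteField.exists_nonsquare (F := ZMod p)
      (by rw [ZMod.ringChar_zmod_n]; exact_mod_cast hp)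
    have hν0 : ν ≠ 0 := fun h => hν ⟨0, by rw [h]; ring⟩
    have h1 : IsSquare (1 : ZMod p) := ⟨1, by ring⟩
    fin_cases k <;> cases bl
    · exact ⟨1, by rw [inv2_of_trace_two hp 1 trace_one, kval_one]; rfl⟩
    · exact ⟨negSL 1, by rw [inv2_negSL hp 1 trace_one, kval_one]; rfl⟩
    · exact ⟨Lmat 1, by
        rw [inv2_of_trace_two hp _ (Lmat_trace 1), kval_Lmat 1 one_ne_zero, if_pos h1]; rfl⟩
    · exact ⟨negSL (Lmat 1), by
        rw [inv2_negSL hp _ (Lmat_trace 1), kval_Lmat 1 one_ne_zero, if_pos h1]; rfl⟩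
    · exact ⟨Lmat ν, by
        rw [inv2_of_trace_two hp _ (Lmat_trace ν), kval_Lmat ν hν0, if_neg hν]; rfl⟩
    · exact ⟨negSL (Lmat ν), by
        rw [inv2_negSL hp _ (Lmat_trace ν), kval_Lmat ν hν0, if_neg hν]; rfl⟩

theorem scharlau_stmt0 (p : ℕ) [Fact p.Prime] (hp : p ≠ 2) :
    Nat.card (ConjClasses (Matrix.SpecialLinearGroup (Fin 2) (ZMod p))) = p + 4 := by
  let f : ConjClasses (SLtwo p) → Xt p :=
    Quotient.lift inv2 (fun a b h => inv2_isConj h)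
  have hbij : Function.Bijective f := by
    constructor
    · intro q q'
      refine Quotient.inductionOn₂ q q' ?_
      intro a b h
      exact Quotient.sound (conj_of_inv2_eq hp a b h)
    · intro x
      obtain ⟨A, hA⟩ := inv2_surj hp x
      exact ⟨ConjClasses.mk A, hA⟩
  rw [Nat.card_eq_of_bijective f hbij, card_Xt hp]
end

section
/- For an odd prime p, the group SL₂(ℤ/pℤ) contains an element of order p + 1. -/
theorem scharlau_stmt4 (p : ℕ) [Fact p.Prime] (hp : p ≠ 2) :
    ∃ g : Matrix.SpecialLinearGroup (Fin 2) (ZMod p), orderOf g = p + 1 := by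
  classical
  have hp1 : 1 ≤ p := (Fact.out : p.Prime).one_lt.le
  have hfr : Module.finrank (ZMod p) (GaloisField p 2) = 2 :=
    GaloisField.finrank p (by norm_num)
  -- basis of F over ZMod p indexed by Fin 2
  let b : Module.Basis (Fin 2) (ZMod p) (GaloisField p 2) :=
    (Module.finBasis (ZMod p) (GaloisField p 2)).reindex (finCongr hfr)
  haveI : Fintype (GaloisField p 2) := Module.fintypeOfFintype b
  have hcard : Fintype.card (GaloisField p 2) = p ^ 2 := by
    have := GaloisField.card p 2 (by norm_num)
    rwa [Nat.card_eq_fintype_card] at this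
  have hcardu : Fintype.card (GaloisField p 2)ˣ = p ^ 2 - 1 := by
    rw [Fintype.card_units, hcard]
  -- a generator of the unit group
  obtain ⟨g, hg⟩ := IsCyclic.exists_generator (α := (GaloisField p 2)ˣ)
  have hordg : orderOf g = p ^ 2 - 1 := by
    rw [orderOf_eq_card_of_forall_mem_zpowers hg, Nat.card_eq_fintype_card, hcardu]
  -- arithmetic: p^2 - 1 = (p+1)*(p-1)
  obtain ⟨q, rfl⟩ : ∃ q, p = q + 1 := ⟨p - 1, by omega⟩
  have hq0 : 0 < q := by
    have := (Fact.out : Nat.Prime (q + 1)).two_le; omega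
  have harith : (q + 1) ^ 2 - 1 = (q + 1 + 1) * q := by ring_nf; omega
  set u : (GaloisField (q+1) 2)ˣ := g ^ q with hu
  have hordu : orderOf u = q + 1 + 1 := by
    rw [hu, orderOf_pow' g hq0.ne', hordg, harith,
      Nat.gcd_eq_right ⟨q + 1 + 1, by ring⟩, Nat.mul_div_cancel _ hq0]
  -- the norm of u is 1
  have hnormg : Algebra.norm (ZMod (q+1)) ((g : GaloisField (q+1) 2)) ≠ 0 := by
    intro h
    have : IsUnit (Algebra.norm (ZMod (q+1)) ((g : GaloisField (q+1) 2))) :=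
      (g.isUnit).map (Algebra.norm (ZMod (q+1)) : GaloisField (q+1) 2 →* ZMod (q+1))
    rw [h] at this
    exact this.ne_zero rfl
  have hnorm : Algebra.norm (ZMod (q+1)) ((u : GaloisField (q+1) 2)) = 1 := by
    have h1 : ((u : GaloisField (q+1) 2)) = (g : GaloisField (q+1) 2) ^ q := by
      rw [hu]; push_cast; ring
    rw [h1, map_pow]
    have := ZMod.pow_card_sub_one_eq_one (p := q + 1) hnormg
    simpa using this
  have hdet : (Algebra.leftMulMatrix b (u : GaloisField (q+1) 2)).det = 1 := by
    rw [← Algebra.norm_eq_matrix_det b, hnorm]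
  set G : Matrix.SpecialLinearGroup (Fin 2) (ZMod (q+1)) :=
    ⟨Algebra.leftMulMatrix b (u : GaloisField (q+1) 2), hdet⟩ with hG
  refine ⟨G, ?_⟩
  have hinj := Algebra.leftMulMatrix_injective b
  have key : ∀ n : ℕ, G ^ n = 1 ↔ (u : GaloisField (q+1) 2) ^ n = 1 := by
    intro n
    rw [show G ^ n = 1 ↔ ((G ^ n : Matrix.SpecialLinearGroup (Fin 2) (ZMod (q+1))) : Matrix (Fin 2) (Fin 2) (ZMod (q+1))) = ((1 : Matrix.SpecialLinearGroup (Fin 2) (ZMod (q+1))) : Matrix (Fin 2) (Fin 2) (ZMod (q+1))) from Subtype.ext_iff, Matrix.SpecialLinearGroup.coe_pow, Matrix.SpecialLinearGroup.coe_one,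
      hG, ← map_pow]
    constructor
    · intro h
      exact hinj (a₁ := (u : GaloisField (q+1) 2) ^ n) (a₂ := 1) (by rw [h, map_one])
    · intro h; rw [h, map_one]
  have hordx : orderOf ((u : GaloisField (q+1) 2)) = q + 1 + 1 := by
    rw [orderOf_units, hordu]
  apply Nat.dvd_antisymm
  · exact orderOf_dvd_of_pow_eq_one ((key (q + 1 + 1)).mpr
      (by rw [← hordx]; exact pow_orderOf_eq_one _))
  · rw [← hordx]
    exact orderOf_dvd_of_pow_eq_one ((key _).mp (pow_orderOf_eq_one _))
end

section
/- For an odd prime p, if g is an element of a cyclic subgroup of SL₂(ℤ/pℤ) of order p+1 and the trace of g is not ±2, then the conjugacy class of g has exactly p(p−1) elements. -/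
set_option maxRecDepth 8000

open Matrix

lemma card_units_zmod (p : ℕ) [Fact p.Prime] : Nat.card (ZMod p)ˣ = p - 1 := by
  rw [Nat.card_eq_fintype_card, ZMod.card_units_eq_totient, Nat.totient_prime (Fact.out)]

lemma card_SL2 (p : ℕ) [Fact p.Prime] :
    Nat.card (SpecialLinearGroup (Fin 2) (ZMod p)) = (p + 1) * (p * (p - 1)) := by
  classical
  have hsurj : Function.Surjective
      (Matrix.GeneralLinearGroup.det : GL (Fin 2) (ZMod p) →* (ZMod p)ˣ) := by
    intro u
    obtain ⟨a, b, hab, hba⟩ := u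
    refine ⟨⟨!![a, 0; 0, 1], !![b, 0; 0, 1], ?_, ?_⟩, ?_⟩
    · rw [Matrix.mul_fin_two, Matrix.one_fin_two]
      congr 1 <;> simp [hab]
    · rw [Matrix.mul_fin_two, Matrix.one_fin_two]
      congr 1 <;> simp [hba]
    · ext
      rw [Matrix.GeneralLinearGroup.val_det_apply]
      simp [Matrix.det_fin_two]
  -- SL ≃ ker det
  have e : SpecialLinearGroup (Fin 2) (ZMod p) ≃
      (Matrix.GeneralLinearGroup.det : GL (Fin 2) (ZMod p) →* (ZMod p)ˣ).ker := by
    refine ⟨fun g => ⟨Matrix.SpecialLinearGroup.toGL g, ?_⟩,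
      fun A => ⟨(A : GL (Fin 2) (ZMod p)).val, ?_⟩, fun g => ?_, fun A => ?_⟩
    · exact Matrix.SpecialLinearGroup.coeToGL_det g
    · have := A.2
      rw [MonoidHom.mem_ker] at this
      have := congrArg Units.val this
      rwa [Matrix.GeneralLinearGroup.val_det_apply] at this
    · ext i j; rfl
    · ext i j; rfl
  have hq := Subgroup.card_eq_card_quotient_mul_card_subgroup
    (Matrix.GeneralLinearGroup.det : GL (Fin 2) (ZMod p) →* (ZMod p)ˣ).ker
  have hquot : Nat.card (GL (Fin 2) (ZMod p) ⧸
      (Matrix.GeneralLinearGroup.det : GL (Fin 2) (ZMod p) →* (ZMod p)ˣ).ker) = p - 1 := by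
    rw [Nat.card_congr (QuotientGroup.quotientKerEquivOfSurjective _ hsurj).toEquiv]
    exact card_units_zmod p
  have hGL : Nat.card (GL (Fin 2) (ZMod p)) = (p^2 - 1) * (p^2 - p) := by
    rw [Matrix.card_GL_field]
    simp [Fin.prod_univ_two, ZMod.card]
  rw [← Nat.card_congr e] at hq
  rw [hquot, hGL] at hq
  have hp2 : 2 ≤ p := (Fact.out : p.Prime).two_le
  obtain ⟨k, rfl⟩ : ∃ k, p = k + 2 := ⟨p - 2, by omega⟩
  have hpos : 0 < k + 2 - 1 := by omega
  refine Nat.eq_of_mul_eq_mul_left hpos ?_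
  rw [← hq]
  have e1 : 1 ≤ (k+2)^2 := Nat.one_le_two_pow.trans (Nat.pow_le_pow_left (by omega) 2)
  have e2 : (k+2) ≤ (k+2)^2 := by nlinarith
  have e3 : (1:ℕ) ≤ k + 2 := by omega
  zify [e1, e2, e3]
  ring


open Matrix Polynomial

lemma aux_no_root (p : ℕ) [Fact p.Prime] (hp : p ≠ 2)
    (g : Matrix.SpecialLinearGroup (Fin 2) (ZMod p)) (hgp : g ^ (p + 1) = 1)
    (htr : (g : Matrix (Fin 2) (Fin 2) (ZMod p)).trace ≠ 2)
    (htr' : (g : Matrix (Fin 2) (Fin 2) (ZMod p)).trace ≠ -2) (μ : ZMod p)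
    (h : μ ^ 2 - (g : Matrix (Fin 2) (Fin 2) (ZMod p)).trace * μ + 1 = 0) : False := by
  set M : Matrix (Fin 2) (Fin 2) (ZMod p) := (g : Matrix (Fin 2) (Fin 2) (ZMod p)) with hM
  have hdet : M.det = 1 := g.2
  have hdet2 : M 0 0 * M 1 1 - M 0 1 * M 1 0 = 1 := by rwa [Matrix.det_fin_two] at hdet
  have ht : M.trace = M 0 0 + M 1 1 := Matrix.trace_fin_two M
  rw [ht] at h htr htr'
  have hdet0 : (M - μ • 1).det = 0 := by
    rw [Matrix.det_fin_two]
    simp only [Matrix.sub_apply, Matrix.smul_apply, Matrix.one_apply_eq,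
      Matrix.one_apply_ne (by decide : (0 : Fin 2) ≠ 1),
      Matrix.one_apply_ne (by decide : (1 : Fin 2) ≠ 0), smul_eq_mul, mul_zero, mul_one, sub_zero]
    linear_combination h + hdet2
  obtain ⟨v, hv0, hv⟩ := (Matrix.exists_mulVec_eq_zero_iff).2 hdet0
  have heig : M.mulVec v = μ • v := by
    have := hv
    rw [Matrix.sub_mulVec, Matrix.smul_mulVec, Matrix.one_mulVec, sub_eq_zero] at this
    exact this
  have hpow : ∀ n : ℕ, ((g ^ n : Matrix.SpecialLinearGroup (Fin 2) (ZMod p)) :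
      Matrix (Fin 2) (Fin 2) (ZMod p)).mulVec v = μ ^ n • v := by
    intro n
    induction n with
    | zero => simp
    | succ n ih =>
      rw [pow_succ, Matrix.SpecialLinearGroup.coe_mul, ← Matrix.mulVec_mulVec, heig,
        Matrix.mulVec_smul, ih, smul_smul, ← pow_succ']
  have hμpow : μ ^ (p + 1) • v = v := by
    have := hpow (p + 1)
    rw [hgp] at this
    simpa using this.symm
  obtain ⟨i, hi⟩ := Function.ne_iff.1 hv0
  have hi' : v i ≠ 0 := by simpa using hi
  have hμp1 : μ ^ (p + 1) = 1 := by
    have h2 : μ ^ (p + 1) * v i = v i := by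
      have := congrFun hμpow i
      simpa [Pi.smul_apply, smul_eq_mul] using this
    exact mul_right_cancel₀ hi' (h2.trans (one_mul _).symm)
  have hμ0 : μ ≠ 0 := by rintro rfl; simp at h
  have hμp2 : μ ^ (p - 1) = 1 := ZMod.pow_card_sub_one_eq_one hμ0
  have hsq : μ ^ 2 = 1 := by
    have hpe : p + 1 = (p - 1) + 2 := by
      have := (Fact.out : p.Prime).two_le; omega
    rw [hpe, pow_add, hμp2, one_mul] at hμp1
    exact hμp1
  have : μ = 1 ∨ μ = -1 := mul_self_eq_one_iff.1 (by rw [← pow_two]; exact hsq)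
  rcases this with rfl | rfl
  · exact htr (by linear_combination -h)
  · exact htr' (by linear_combination h)


open Polynomial

lemma aux_field (p : ℕ) [Fact p.Prime] (t : ZMod p)
    (hroot : ∀ μ : ZMod p, μ ^ 2 - t * μ + 1 ≠ 0) :
    ∃ (F : Type) (_ : Field F) (φ : ZMod p →+* F) (β : F),
      Function.Injective φ ∧ (∀ c, β ≠ φ c) ∧
      (β ^ 2 - φ t * β + 1 = 0) ∧ (β ^ p = φ t - β) ∧
      Finite {u : F // u ^ (p + 1) = 1} ∧
      Nat.card {u : F // u ^ (p + 1) = 1} ≤ p + 1 := by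
  have hp1 : 1 < p := (Fact.out : p.Prime).one_lt
  set f : (ZMod p)[X] := X ^ 2 - C t * X + 1 with hf
  have hdeg : f.natDegree = 2 := by unfold f; compute_degree!
  have hne : f ≠ 0 := fun h0 => by simp [h0] at hdeg
  have heval : ∀ (F : Type) (_ : CommRing F) (φ : ZMod p →+* F) (x : F),
      f.eval₂ φ x = x ^ 2 - φ t * x + 1 := by
    intro F _ φ x
    simp [hf]
  have hirr : Irreducible f := by
    rw [irreducible_iff_roots_eq_zero_of_degree_le_three (by omega) (by omega)]
    rw [Multiset.eq_zero_iff_forall_notMem]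
    intro r hr
    rw [mem_roots hne] at hr
    have : f.eval r = 0 := hr
    rw [show f.eval r = f.eval₂ (RingHom.id _) r by rw [eval₂_id]] at this
    · rw [heval] at this
      exact hroot r (by simpa using this)
  haveI : Fact (Irreducible f) := ⟨hirr⟩
  refine ⟨AdjoinRoot f, inferInstance, algebraMap (ZMod p) (AdjoinRoot f), AdjoinRoot.root f,
    ?_, ?_, ?_, ?_, ?_, ?_⟩
  · exact (algebraMap (ZMod p) (AdjoinRoot f)).injective
  · intro c hc
    apply hroot c
    apply (algebraMap (ZMod p) (AdjoinRoot f)).injective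
    push_cast [_root_.map_add, _root_.map_sub, _root_.map_mul, _root_.map_pow, _root_.map_one, _root_.map_zero]
    rw [← hc]
    have := AdjoinRoot.eval₂_root f
    rw [← AdjoinRoot.algebraMap_eq, heval] at this
    simpa using this
  · have := AdjoinRoot.eval₂_root f
    rw [← AdjoinRoot.algebraMap_eq, heval] at this
    exact this
  · -- Frobenius
    set F := AdjoinRoot f
    set φ := algebraMap (ZMod p) F
    set β := AdjoinRoot.root f with hβdef
    have hβ : β ^ 2 - φ t * β + 1 = 0 := by
      have := AdjoinRoot.eval₂_root f
      rwa [← AdjoinRoot.algebraMap_eq, heval] at this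
    have hβnot : ∀ c : ZMod p, β ≠ φ c := by
      intro c hc
      apply hroot c
      apply φ.injective
      push_cast [_root_.map_add, _root_.map_sub, _root_.map_mul, _root_.map_pow, _root_.map_one, _root_.map_zero]
      rw [← hc]
      simpa using hβ
    haveI : CharP F p := charP_of_injective_ringHom φ.injective p
    have h1 : (β ^ p) ^ 2 - φ t * β ^ p + 1 = 0 := by
      have h0 : (β ^ 2 - φ t * β + 1) ^ p = 0 := by rw [hβ]; exact zero_pow (by omega)
      rw [add_pow_char, sub_pow_char, mul_pow, one_pow, ← pow_mul, mul_comm 2 p, pow_mul,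
        ← _root_.map_pow, ZMod.pow_card] at h0
      exact h0
    have h2 : (β ^ p - β) * (β ^ p - (φ t - β)) = 0 := by linear_combination h1 - hβ
    rcases mul_eq_zero.1 h2 with hcase | hcase
    · exfalso
      have hcase' : β ^ p = β := by linear_combination hcase
      classical
      set P : F[X] := X ^ p - X with hP
      have hPdeg : P.natDegree = p := by
        unfold P
        compute_degree!
        · rw [if_neg (by omega : ¬ 1 = p)]; norm_num
        · omega
      have hPne : P ≠ 0 := fun h0 => by rw [h0] at hPdeg; simp at hPdeg; omega
      set T : Finset F := insert β (Finset.univ.image φ) with hT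
      have hsub : T ⊆ P.roots.toFinset := by
        intro x hx
        rw [Multiset.mem_toFinset, mem_roots hPne]
        rcases Finset.mem_insert.1 hx with rfl | hx
        · simp [IsRoot, hP, hcase']
        · obtain ⟨c, _, rfl⟩ := Finset.mem_image.1 hx
          simp [IsRoot, hP, ← _root_.map_pow, ZMod.pow_card]
      have hcardT : T.card = p + 1 := by
        rw [hT, Finset.card_insert_of_notMem (by
          intro hmem
          obtain ⟨c, _, hc⟩ := Finset.mem_image.1 hmem
          exact hβnot c hc.symm)]
        rw [Finset.card_image_of_injective _ φ.injective, Finset.card_univ, ZMod.card]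
      have hle := (Finset.card_le_card hsub).trans
        ((Multiset.toFinset_card_le _).trans P.card_roots')
      rw [hPdeg] at hle
      omega
    · linear_combination hcase
  · -- finiteness
    classical
    have h01 : (0:ℕ) < p + 1 := by omega
    refine Finite.of_injective (fun u : {u : AdjoinRoot f // u ^ (p + 1) = 1} =>
      (⟨u.1, ?_⟩ : ((nthRoots (p + 1) (1 : AdjoinRoot f)).toFinset : Finset (AdjoinRoot f)))) ?_
    · rw [Multiset.mem_toFinset, mem_nthRoots h01]; exact u.2
    · intro u v huv
      ext
      simpa using congrArg Subtype.val huv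
  · -- counting
    classical
    have h01 : (0:ℕ) < p + 1 := by omega
    have : ∀ u : {u : AdjoinRoot f // u ^ (p + 1) = 1},
        (u : AdjoinRoot f) ∈ (nthRoots (p + 1) (1 : AdjoinRoot f)).toFinset := by
      intro u
      rw [Multiset.mem_toFinset, mem_nthRoots h01]
      exact u.2
    have hinj : Function.Injective
        (fun u : {u : AdjoinRoot f // u ^ (p + 1) = 1} =>
          (⟨u.1, this u⟩ : ((nthRoots (p + 1) (1 : AdjoinRoot f)).toFinset : Finset (AdjoinRoot f)))) := by
      intro u v huv
      ext
      simpa using congrArg Subtype.val huv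
    have hcard := Nat.card_le_card_of_injective _ hinj
    calc Nat.card {u : AdjoinRoot f // u ^ (p + 1) = 1}
        ≤ Nat.card ((nthRoots (p + 1) (1 : AdjoinRoot f)).toFinset : Finset (AdjoinRoot f)) := hcard
      _ = (nthRoots (p + 1) (1 : AdjoinRoot f)).toFinset.card := Nat.card_eq_finsetCard _
      _ ≤ Multiset.card (nthRoots (p + 1) (1 : AdjoinRoot f)) := Multiset.toFinset_card_le _
      _ ≤ p + 1 := card_nthRoots _ _


open Matrix MulAction



theorem scharlau_stmt5 (p : ℕ) [Fact p.Prime] (hp : p ≠ 2)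
    (H : Subgroup (Matrix.SpecialLinearGroup (Fin 2) (ZMod p)))
    (hcyc : IsCyclic H) (hcard : Nat.card H = p + 1)
    (g : Matrix.SpecialLinearGroup (Fin 2) (ZMod p)) (hg : g ∈ H)
    (htr : (g : Matrix (Fin 2) (Fin 2) (ZMod p)).trace ≠ 2)
    (htr' : (g : Matrix (Fin 2) (Fin 2) (ZMod p)).trace ≠ -2) :
    Nat.card {x : Matrix.SpecialLinearGroup (Fin 2) (ZMod p) | IsConj g x}
      = p * (p - 1) := by
  classical
  set M : Matrix (Fin 2) (Fin 2) (ZMod p) := (g : Matrix (Fin 2) (Fin 2) (ZMod p)) with hM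
  set t : ZMod p := M.trace with hMt
  -- g ^ (p+1) = 1
  have hgp : g ^ (p + 1) = 1 := by
    have h1 : (⟨g, hg⟩ : H) ^ (p + 1) = 1 := by rw [← hcard]; exact pow_card_eq_one'
    have := congrArg Subtype.val h1
    simpa using this
  have hroot : ∀ μ : ZMod p, μ ^ 2 - t * μ + 1 ≠ 0 :=
    fun μ h => aux_no_root p hp g hgp htr htr' μ h
  obtain ⟨F, _, φ, β, hinj, hβnot, hβ, hfrob, hfin, hcount⟩ := aux_field p t hroot
  haveI : CharP F p := charP_of_injective_ringHom hinj p
  have hdet2 : M 0 0 * M 1 1 - M 0 1 * M 1 0 = 1 := by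
    have := g.2; rwa [Matrix.det_fin_two] at this
  have ht : t = M 0 0 + M 1 1 := Matrix.trace_fin_two M
  -- M 0 1 ≠ 0
  have hb : M 0 1 ≠ 0 := by
    intro hb0
    exact hroot (M 1 1) (by linear_combination -hdet2 - M 1 0 * hb0 - M 1 1 * ht)
  -- commutant representation
  have hrep : ∀ A : Matrix (Fin 2) (Fin 2) (ZMod p), A * M = M * A →
      A = (A 0 0 - A 0 1 * (M 0 1)⁻¹ * M 0 0) • (1 : Matrix (Fin 2) (Fin 2) (ZMod p))
        + (A 0 1 * (M 0 1)⁻¹) • M := by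
    intro A hAM
    have h00 := congrFun (congrFun hAM 0) 0
    have h01 := congrFun (congrFun hAM 0) 1
    simp only [Matrix.mul_apply, Fin.sum_univ_two] at h00 h01
    ext i j
    fin_cases i <;> fin_cases j
    · simp only [Matrix.add_apply, Matrix.smul_apply, Matrix.one_apply, smul_eq_mul]
      norm_num
    · simp only [Matrix.add_apply, Matrix.smul_apply, Matrix.one_apply, smul_eq_mul]
      norm_num
      field_simp
    · simp only [Matrix.add_apply, Matrix.smul_apply, Matrix.one_apply, smul_eq_mul]
      norm_num
      field_simp
      linear_combination -h00
    · simp only [Matrix.add_apply, Matrix.smul_apply, Matrix.one_apply, smul_eq_mul]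
      norm_num
      field_simp
      linear_combination -h01
  haveI := hfin
  set X : Matrix.SpecialLinearGroup (Fin 2) (ZMod p) → ZMod p :=
    fun m => (m : Matrix (Fin 2) (Fin 2) (ZMod p)) 0 0
      - (m : Matrix (Fin 2) (Fin 2) (ZMod p)) 0 1 * (M 0 1)⁻¹ * M 0 0 with hXdef
  set Y : Matrix.SpecialLinearGroup (Fin 2) (ZMod p) → ZMod p :=
    fun m => (m : Matrix (Fin 2) (Fin 2) (ZMod p)) 0 1 * (M 0 1)⁻¹
  have hmat : ∀ m : Matrix.SpecialLinearGroup (Fin 2) (ZMod p), m * g = g * m →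
      (m : Matrix (Fin 2) (Fin 2) (ZMod p)) * M = M * (m : Matrix (Fin 2) (Fin 2) (ZMod p)) := by
    intro m hc
    have := congrArg (fun z : Matrix.SpecialLinearGroup (Fin 2) (ZMod p) =>
      (z : Matrix (Fin 2) (Fin 2) (ZMod p))) hc
    simpa using this
  have hrep' : ∀ m : Matrix.SpecialLinearGroup (Fin 2) (ZMod p), m * g = g * m →
      (m : Matrix (Fin 2) (Fin 2) (ZMod p)) = X m • (1 : Matrix (Fin 2) (Fin 2) (ZMod p)) + Y m • M :=
    fun m hc => hrep _ (hmat m hc)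
  clear_value X Y
  have hxy : ∀ m : Matrix.SpecialLinearGroup (Fin 2) (ZMod p), m * g = g * m →
      X m ^ 2 + t * X m * Y m + Y m ^ 2 = 1 := by
    intro m hc
    have hA := hrep' m hc
    have hd : (X m • (1 : Matrix (Fin 2) (Fin 2) (ZMod p)) + Y m • M).det = 1 := by
      rw [← hA]; exact m.2
    rw [Matrix.det_fin_two] at hd
    simp only [Matrix.add_apply, Matrix.smul_apply, Matrix.one_apply, smul_eq_mul] at hd
    norm_num at hd
    linear_combination hd + X m * Y m * ht - Y m ^ 2 * hdet2
  have hnorm : ∀ m : Matrix.SpecialLinearGroup (Fin 2) (ZMod p), m * g = g * m →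
      (φ (X m) + φ (Y m) * β) ^ (p + 1) = 1 := by
    intro m hc
    have hxy' := congrArg φ (hxy m hc)
    simp only [_root_.map_add, _root_.map_mul, _root_.map_pow, _root_.map_one] at hxy'
    have hupow : (φ (X m) + φ (Y m) * β) ^ p = φ (X m) + φ (Y m) * (φ t - β) := by
      rw [add_pow_char, mul_pow, ← _root_.map_pow, ← _root_.map_pow, ZMod.pow_card, ZMod.pow_card, hfrob]
    rw [pow_succ, hupow]
    linear_combination hxy' - (φ (Y m)) ^ 2 * hβ
  have hinj2 : ∀ m₁ m₂ : Matrix.SpecialLinearGroup (Fin 2) (ZMod p),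
      m₁ * g = g * m₁ → m₂ * g = g * m₂ →
      φ (X m₁) + φ (Y m₁) * β = φ (X m₂) + φ (Y m₂) * β → m₁ = m₂ := by
    intro m₁ m₂ h₁ h₂ he
    have hY : Y m₁ = Y m₂ := by
      by_contra hne
      have h6 : φ (Y m₁) - φ (Y m₂) ≠ 0 := by
        intro h0
        exact hne (hinj (sub_eq_zero.1 h0))
      have h5 : (φ (Y m₁) - φ (Y m₂)) * β = φ (X m₂) - φ (X m₁) := by
        linear_combination he
      apply hβnot ((X m₂ - X m₁) * (Y m₁ - Y m₂)⁻¹)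
      rw [_root_.map_mul, map_inv₀, _root_.map_sub, _root_.map_sub]
      field_simp [h6]
      linear_combination h5
    have hX : X m₁ = X m₂ := by
      rw [hY] at he
      exact hinj (add_right_cancel he)
    have hm₁ := hrep' m₁ h₁
    have hm₂ := hrep' m₂ h₂
    apply Subtype.ext
    have hmid : X m₁ • (1 : Matrix (Fin 2) (Fin 2) (ZMod p)) + Y m₁ • M
        = X m₂ • (1 : Matrix (Fin 2) (Fin 2) (ZMod p)) + Y m₂ • M := by rw [hX, hY]
    exact hm₁.trans (hmid.trans hm₂.symm)
  -- centralizer cardinality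
  have hZle : Nat.card (Subgroup.centralizer
      ({g} : Set (Matrix.SpecialLinearGroup (Fin 2) (ZMod p)))) ≤ p + 1 := by
    refine le_trans (Nat.card_le_card_of_injective
      (fun m => (⟨φ (X m.1) + φ (Y m.1) * β,
        hnorm m.1 (Subgroup.mem_centralizer_singleton_iff.1 m.2)⟩ :
          {u : F // u ^ (p + 1) = 1})) ?_) hcount
    intro m₁ m₂ h
    exact Subtype.ext (hinj2 _ _ (Subgroup.mem_centralizer_singleton_iff.1 m₁.2)
      (Subgroup.mem_centralizer_singleton_iff.1 m₂.2) (congrArg Subtype.val h))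
  have hHZ : H ≤ Subgroup.centralizer ({g} : Set (Matrix.SpecialLinearGroup (Fin 2) (ZMod p))) := by
    intro h hh
    rw [Subgroup.mem_centralizer_singleton_iff]
    haveI := hcyc
    obtain ⟨x, hx⟩ := IsCyclic.exists_generator (α := H)
    obtain ⟨m, hm⟩ := Subgroup.mem_zpowers_iff.1 (hx ⟨h, hh⟩)
    obtain ⟨n, hn⟩ := Subgroup.mem_zpowers_iff.1 (hx ⟨g, hg⟩)
    have : (⟨h, hh⟩ : H) * ⟨g, hg⟩ = ⟨g, hg⟩ * ⟨h, hh⟩ := by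
      rw [← hm, ← hn, ← _root_.zpow_add, ← _root_.zpow_add, add_comm]
    simpa using congrArg Subtype.val this
  have hZ : Nat.card (Subgroup.centralizer
      ({g} : Set (Matrix.SpecialLinearGroup (Fin 2) (ZMod p)))) = p + 1 := by
    refine le_antisymm hZle ?_
    rw [← hcard]
    exact Subgroup.card_le_of_le hHZ
  -- orbit-stabilizer
  have horb : {x : Matrix.SpecialLinearGroup (Fin 2) (ZMod p) | IsConj g x}
      = MulAction.orbit (ConjAct (Matrix.SpecialLinearGroup (Fin 2) (ZMod p))) g := by
    ext x
    rw [Set.mem_setOf_eq, ConjAct.mem_orbit_conjAct]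
    exact isConj_comm
  have hstab : Nat.card (MulAction.stabilizer
      (ConjAct (Matrix.SpecialLinearGroup (Fin 2) (ZMod p))) g) = p + 1 := by
    rw [← hZ]
    apply Nat.card_congr
    refine ⟨fun y => ⟨ConjAct.ofConjAct y.1, ?_⟩, fun x => ⟨ConjAct.toConjAct x.1, ?_⟩, ?_, ?_⟩
    · rw [Subgroup.mem_centralizer_singleton_iff]
      have h7 := y.2
      rw [MulAction.mem_stabilizer_iff, ConjAct.smul_def] at h7
      exact mul_inv_eq_iff_eq_mul.1 h7
    · rw [MulAction.mem_stabilizer_iff, ConjAct.smul_def]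
      have h8 := Subgroup.mem_centralizer_singleton_iff.1 x.2
      rw [ConjAct.ofConjAct_toConjAct, h8]
      group
    · intro y; ext; simp
    · intro x; ext; simp
  have hOS := MulAction.card_orbit_mul_card_stabilizer_eq_card_group
    (ConjAct (Matrix.SpecialLinearGroup (Fin 2) (ZMod p))) g
  rw [horb]
  have hcardG : Fintype.card (ConjAct (Matrix.SpecialLinearGroup (Fin 2) (ZMod p)))
      = (p + 1) * (p * (p - 1)) := by
    rw [← Nat.card_eq_fintype_card]
    exact card_SL2 p
  rw [hcardG] at hOS
  rw [← Nat.card_eq_fintype_card, ← Nat.card_eq_fintype_card] at hOS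
  rw [hstab] at hOS
  have hpos : 0 < p + 1 := Nat.succ_pos p
  exact Nat.eq_of_mul_eq_mul_right hpos (hOS.trans (mul_comm _ _))
end

section
/- Let G be a finite group and P a partition of G, i.e., a collection of subgroups whose pairwise intersections are trivial and whose union is G. Then the integer |P| − 1, viewed as an element of ℤ[G], lies in the two-sided ideal of ℤ[G] generated by the elements Σ_{h ∈ H} h for H ranging over nontrivial subgroups of G. -/
open Finset

theorem scharlau_stmt7 {G : Type*} [Group G] [Fintype G]
    (P : Finset (Subgroup G))
    (hnt : ∀ H ∈ P, H ≠ ⊥)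
    (hdisj : ∀ H ∈ P, ∀ K ∈ P, H ≠ K → H ⊓ K = ⊥)
    (hcover : ∀ g : G, ∃ H ∈ P, g ∈ H) :
    ((P.card : ℤ) - 1) • (1 : MonoidAlgebra ℤ G) ∈
      TwoSidedIdeal.span {a : MonoidAlgebra ℤ G |
        ∃ H : Subgroup G, H ≠ ⊥ ∧
          a = ∑ᶠ h ∈ (H : Set G), MonoidAlgebra.single h (1 : ℤ)} := by
  classical
  obtain ⟨H0, hH0P, hg1⟩ := hcover 1
  have htop : (⊤ : Subgroup G) ≠ ⊥ := by
    intro h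
    exact hnt H0 hH0P (le_bot_iff.mp (h ▸ le_top))
  set σ : Subgroup G → MonoidAlgebra ℤ G :=
    fun H => ∑ h ∈ (H : Set G).toFinset, MonoidAlgebra.single h (1 : ℤ) with hσ
  have hfin : ∀ H : Subgroup G,
      (∑ᶠ h ∈ (H : Set G), MonoidAlgebra.single h (1 : ℤ)) = σ H := by
    intro H
    simp only [hσ]
    rw [← finsum_mem_coe_finset]
    rw [Set.coe_toFinset]
  have hgen : ∀ H : Subgroup G, H ≠ ⊥ → σ H ∈
      TwoSidedIdeal.span {a : MonoidAlgebra ℤ G |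
        ∃ H : Subgroup G, H ≠ ⊥ ∧
          a = ∑ᶠ h ∈ (H : Set G), MonoidAlgebra.single h (1 : ℤ)} :=
    fun H hH => TwoSidedIdeal.subset_span ⟨H, hH, (hfin H).symm⟩
  have hterm : ∀ (H : Subgroup G) (g : G),
      (σ H).coeff g = if g ∈ H then (1 : ℤ) else 0 := by
    intro H g
    simp only [hσ]
    rw [MonoidAlgebra.coeff_sum, Finsupp.finset_sum_apply]
    simp only [MonoidAlgebra.coeff_single, Finsupp.single_apply]
    rw [Finset.sum_ite_eq' ((H : Set G).toFinset) g (fun _ => (1:ℤ))]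
    simp
  have key : ((P.card : ℤ) - 1) • (1 : MonoidAlgebra ℤ G)
      = (∑ H ∈ P, σ H) - σ ⊤ := by
    ext g
    rw [MonoidAlgebra.coeff_sub, Finsupp.sub_apply, MonoidAlgebra.coeff_sum, Finsupp.finset_sum_apply,
      MonoidAlgebra.coeff_smul, Finsupp.smul_apply]
    simp_rw [hterm]
    have hone : (1 : MonoidAlgebra ℤ G).coeff g = if g = 1 then (1:ℤ) else 0 := by
      rw [MonoidAlgebra.one_def, MonoidAlgebra.coeff_single, Finsupp.single_apply]
      simp [eq_comm]
    rw [hone]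
    by_cases hg : g = 1
    · subst hg
      simp only [if_pos rfl, Subgroup.one_mem, if_true, Subgroup.mem_top,
        Finset.sum_const, nsmul_eq_mul, mul_one, smul_eq_mul]
    · obtain ⟨H1, hH1P, hgH1⟩ := hcover g
      have hsum : (∑ H ∈ P, if g ∈ H then (1:ℤ) else 0) = 1 := by
        rw [Finset.sum_eq_single_of_mem H1 hH1P]
        · rw [if_pos hgH1]
        · intro K hKP hKne
          rw [if_neg]
          intro hgK
          exact hg (Subgroup.mem_bot.mp
            (hdisj K hKP H1 hH1P hKne ▸ Subgroup.mem_inf.mpr ⟨hgK, hgH1⟩))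
      rw [hsum, if_neg hg]
      simp
  rw [key]
  exact sub_mem (sum_mem fun H hH => hgen H (hnt H hH)) (hgen ⊤ htop)
end

section
/- Let p be an odd prime, T = E₁₂(1), and D = diag(u, u⁻¹) ∈ SL₂(ℤ/pℤ) with u ≠ ±1. Then the conjugacy class of D is exactly the union of the G-conjugates of the coset D⟨T⟩, and there are exactly p+1 distinct conjugates of the set D⟨T⟩ under conjugation by G = SL₂(ℤ/pℤ). -/
open Matrix
open scoped Pointwise

namespace ScharlauAux

variable {F : Type*} [Field F]

/-- The set of matrices in SL₂ fixing `v` with eigenvalue `u`. -/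
def Pset (u : F) (v : Fin 2 → F) : Set (Matrix.SpecialLinearGroup (Fin 2) F) :=
  {x | (x : Matrix (Fin 2) (Fin 2) F) *ᵥ v = u • v}

lemma conj_Pset (u : F) (v : Fin 2 → F) (g : Matrix.SpecialLinearGroup (Fin 2) F) :
    (fun x => g * x * g⁻¹) '' Pset u v = Pset u ((g : Matrix (Fin 2) (Fin 2) F) *ᵥ v) := by
  have hgg : ((g⁻¹ : Matrix.SpecialLinearGroup (Fin 2) F) : Matrix (Fin 2) (Fin 2) F)
      * ((g : Matrix.SpecialLinearGroup (Fin 2) F) : Matrix (Fin 2) (Fin 2) F) = 1 := by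
    rw [← Matrix.SpecialLinearGroup.coe_mul, inv_mul_cancel, Matrix.SpecialLinearGroup.coe_one]
  ext y
  constructor
  · rintro ⟨x, hx, rfl⟩
    have hx' : (x : Matrix (Fin 2) (Fin 2) F) *ᵥ v = u • v := hx
    show ((g * x * g⁻¹ : _) : Matrix (Fin 2) (Fin 2) F) *ᵥ (↑g *ᵥ v) = u • (↑g *ᵥ v)
    rw [Matrix.SpecialLinearGroup.coe_mul, Matrix.SpecialLinearGroup.coe_mul,
      mulVec_mulVec, mul_assoc, hgg, mul_one, ← mulVec_mulVec, hx', mulVec_smul]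
  · intro hy
    refine ⟨g⁻¹ * y * g, ?_, by group⟩
    show ((g⁻¹ * y * g : _) : Matrix (Fin 2) (Fin 2) F) *ᵥ v = u • v
    have hy' : (y : Matrix (Fin 2) (Fin 2) F) *ᵥ (↑g *ᵥ v) = u • (↑g *ᵥ v) := hy
    rw [Matrix.SpecialLinearGroup.coe_mul, Matrix.SpecialLinearGroup.coe_mul,
      ← mulVec_mulVec, ← mulVec_mulVec, hy', mulVec_smul, mulVec_mulVec, hgg, one_mulVec]

lemma Pset_smul {u c : F} (hc : c ≠ 0) (v : Fin 2 → F) : Pset u (c • v) = Pset u v := by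
  ext x
  simp only [Pset, Set.mem_setOf_eq, mulVec_smul]
  rw [smul_comm u c]
  exact ⟨fun h => smul_right_injective _ hc h, fun h => by rw [h]⟩

lemma Pset_sep {u : F} (hu0 : u ≠ 0) (hu2 : u * u ≠ 1) {v w : Fin 2 → F}
    (hvw : v 0 * w 1 - v 1 * w 0 ≠ 0) : Pset u v ≠ Pset u w := by
  set d : F := v 0 * w 1 - v 1 * w 0 with hd
  set B : Matrix (Fin 2) (Fin 2) F := !![v 0, w 0; v 1, w 1] with hB
  have hdetB : B.det = d := by rw [hB, det_fin_two_of, hd]; ring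
  set C : Matrix (Fin 2) (Fin 2) F := d⁻¹ • B.adjugate with hC
  have hBC : B * C = 1 := by
    rw [hC, Matrix.mul_smul, Matrix.mul_adjugate, hdetB, smul_smul, inv_mul_cancel₀ hvw, one_smul]
  have hCB : C * B = 1 := by
    rw [hC, Matrix.smul_mul, Matrix.adjugate_mul, hdetB, smul_smul, inv_mul_cancel₀ hvw, one_smul]
  set D0 : Matrix (Fin 2) (Fin 2) F := !![u, 0; 0, u⁻¹] with hD0
  set N : Matrix (Fin 2) (Fin 2) F := B * D0 * C with hN
  have hdetD0 : D0.det = 1 := by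
    rw [hD0, det_fin_two_of, mul_inv_cancel₀ hu0]; ring
  have hdetN : N.det = 1 := by
    rw [hN, Matrix.det_mul, Matrix.det_mul, hdetD0, mul_one, ← Matrix.det_mul, hBC,
      Matrix.det_one]
  have hBe1 : B *ᵥ ![1, 0] = v := by
    funext i
    fin_cases i <;> simp [hB, Matrix.mulVec, dotProduct, Fin.sum_univ_two]
  have hBe2 : B *ᵥ ![0, 1] = w := by
    funext i
    fin_cases i <;> simp [hB, Matrix.mulVec, dotProduct, Fin.sum_univ_two]
  have hD0e1 : D0 *ᵥ ![(1 : F), 0] = u • ![1, 0] := by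
    funext i
    fin_cases i <;> simp [hD0, Matrix.mulVec, dotProduct, Fin.sum_univ_two]
  have hD0e2 : D0 *ᵥ ![(0 : F), 1] = u⁻¹ • ![0, 1] := by
    funext i
    fin_cases i <;> simp [hD0, Matrix.mulVec, dotProduct, Fin.sum_univ_two]
  have hNv : N *ᵥ v = u • v := by
    calc N *ᵥ v = N *ᵥ (B *ᵥ ![1, 0]) := by rw [hBe1]
      _ = (N * B) *ᵥ ![1, 0] := mulVec_mulVec _ _ _
      _ = (B * D0) *ᵥ ![1, 0] := by rw [hN, mul_assoc, hCB, mul_one]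
      _ = B *ᵥ (D0 *ᵥ ![1, 0]) := (mulVec_mulVec _ _ _).symm
      _ = B *ᵥ (u • ![1, 0]) := by rw [hD0e1]
      _ = u • (B *ᵥ ![1, 0]) := mulVec_smul _ _ _
      _ = u • v := by rw [hBe1]
  have hNw : N *ᵥ w = u⁻¹ • w := by
    calc N *ᵥ w = N *ᵥ (B *ᵥ ![0, 1]) := by rw [hBe2]
      _ = (N * B) *ᵥ ![0, 1] := mulVec_mulVec _ _ _
      _ = (B * D0) *ᵥ ![0, 1] := by rw [hN, mul_assoc, hCB, mul_one]
      _ = B *ᵥ (D0 *ᵥ ![0, 1]) := (mulVec_mulVec _ _ _).symm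
      _ = B *ᵥ (u⁻¹ • ![0, 1]) := by rw [hD0e2]
      _ = u⁻¹ • (B *ᵥ ![0, 1]) := mulVec_smul _ _ _
      _ = u⁻¹ • w := by rw [hBe2]
  intro hPP
  have hx : (⟨N, hdetN⟩ : Matrix.SpecialLinearGroup (Fin 2) F) ∈ Pset u v := hNv
  rw [hPP] at hx
  have hx' : u⁻¹ • w = u • w := by rw [← hNw]; exact hx
  have hne : u⁻¹ - u ≠ 0 := by
    refine sub_ne_zero.mpr fun h => hu2 ?_
    have h1 : u * u = u * u⁻¹ := by rw [h]
    exact h1.trans (mul_inv_cancel₀ hu0)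
  have hw : ∀ i, w i = 0 := by
    intro i
    have h2 := congrFun hx' i
    simp only [Pi.smul_apply, smul_eq_mul] at h2
    have h3 : (u⁻¹ - u) * w i = 0 := by rw [sub_mul, h2, sub_self]
    exact (mul_eq_zero.mp h3).resolve_left hne
  apply hvw
  rw [hd, hw 0, hw 1]
  ring

end ScharlauAux

open Matrix ScharlauAux in
theorem scharlau_stmt10 (p : ℕ) [Fact p.Prime] (hp : p ≠ 2)
    (u : ZMod p) (hu1 : u ≠ 1) (hu1' : u ≠ -1)
    (T D : Matrix.SpecialLinearGroup (Fin 2) (ZMod p))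
    (hT : (T : Matrix (Fin 2) (Fin 2) (ZMod p)) = !![1, 1; 0, 1])
    (hD : (D : Matrix (Fin 2) (Fin 2) (ZMod p)) = !![u, 0; 0, u⁻¹]) :
    ({x : Matrix.SpecialLinearGroup (Fin 2) (ZMod p) | IsConj D x}
        = ⋃ g : Matrix.SpecialLinearGroup (Fin 2) (ZMod p),
            (fun x => g * x * g⁻¹) ''
              (D • ((Subgroup.zpowers T : Subgroup _) : Set (Matrix.SpecialLinearGroup (Fin 2) (ZMod p))))) ∧
      Set.ncard {A : Set (Matrix.SpecialLinearGroup (Fin 2) (ZMod p)) |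
          ∃ g : Matrix.SpecialLinearGroup (Fin 2) (ZMod p),
            A = (fun x => g * x * g⁻¹) ''
              (D • ((Subgroup.zpowers T : Subgroup _) : Set (Matrix.SpecialLinearGroup (Fin 2) (ZMod p))))}
        = p + 1 := by
  have huinv : u * u⁻¹ = 1 := by
    have hdet := D.2
    rw [hD, det_fin_two_of] at hdet
    simpa using hdet
  have hu0 : u ≠ 0 := by
    intro h; rw [h, zero_mul] at huinv; exact zero_ne_one huinv
  have hu2 : u * u ≠ 1 := by
    intro h
    have h1 : (u - 1) * (u + 1) = 0 := by linear_combination h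
    rcases mul_eq_zero.mp h1 with h2 | h2
    · exact hu1 (sub_eq_zero.mp h2)
    · exact hu1' (eq_neg_of_add_eq_zero_left h2)
  have hne : u⁻¹ - u ≠ 0 := by
    refine sub_ne_zero.mpr fun h => hu2 ?_
    have h1 : u * u = u * u⁻¹ := by rw [h]
    exact h1.trans huinv
  have coe_T_pow : ∀ n : ℕ,
      ((T ^ n : Matrix.SpecialLinearGroup (Fin 2) (ZMod p)) : Matrix (Fin 2) (Fin 2) (ZMod p))
        = !![1, (n : ZMod p); 0, 1] := by
    intro n
    induction n with
    | zero => simp [Matrix.one_fin_two]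
    | succ n ih =>
      rw [pow_succ, Matrix.SpecialLinearGroup.coe_mul, ih, hT, Matrix.mul_fin_two]
      ext i j
      fin_cases i <;> fin_cases j <;> simp <;> push_cast <;> ring
  have coe_T_zpow : ∀ m : ℤ,
      ((T ^ m : Matrix.SpecialLinearGroup (Fin 2) (ZMod p)) : Matrix (Fin 2) (Fin 2) (ZMod p))
        = !![1, (m : ZMod p); 0, 1] := by
    intro m
    cases m with
    | ofNat n =>
      rw [Int.ofNat_eq_natCast, zpow_natCast, coe_T_pow]
      push_cast
      rfl
    | negSucc n =>
      rw [zpow_negSucc, Matrix.SpecialLinearGroup.coe_inv, coe_T_pow, Matrix.adjugate_fin_two]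
      ext i j
      fin_cases i <;> fin_cases j <;> simp [Int.cast_negSucc] <;> push_cast <;> ring
  have memP : ∀ y : Matrix.SpecialLinearGroup (Fin 2) (ZMod p),
      y ∈ Pset u ![1, 0] ↔
        ((y : Matrix (Fin 2) (Fin 2) (ZMod p)) 0 0 = u
          ∧ (y : Matrix (Fin 2) (Fin 2) (ZMod p)) 1 0 = 0) := by
    intro y
    constructor
    · intro h
      have h' : (y : Matrix (Fin 2) (Fin 2) (ZMod p)) *ᵥ ![1, 0] = u • ![1, 0] := h
      constructor
      · simpa [Matrix.mulVec, dotProduct, Fin.sum_univ_two] using congrFun h' 0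
      · simpa [Matrix.mulVec, dotProduct, Fin.sum_univ_two] using congrFun h' 1
    · rintro ⟨h1, h2⟩
      show (y : Matrix (Fin 2) (Fin 2) (ZMod p)) *ᵥ ![1, 0] = u • ![1, 0]
      funext i
      fin_cases i <;> simp [Matrix.mulVec, dotProduct, Fin.sum_univ_two, h1, h2]
  have h11 : ∀ y : Matrix.SpecialLinearGroup (Fin 2) (ZMod p),
      (y : Matrix (Fin 2) (Fin 2) (ZMod p)) 0 0 = u →
      (y : Matrix (Fin 2) (Fin 2) (ZMod p)) 1 0 = 0 →
      (y : Matrix (Fin 2) (Fin 2) (ZMod p)) 1 1 = u⁻¹ := by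
    intro y ha hb
    have hdet := y.2
    rw [Matrix.det_fin_two, ha, hb] at hdet
    have : u * (y : Matrix (Fin 2) (Fin 2) (ZMod p)) 1 1 = u * u⁻¹ := by
      rw [huinv]; linear_combination hdet
    exact mul_left_cancel₀ hu0 this
  have hS : (D • ((Subgroup.zpowers T : Subgroup _) :
      Set (Matrix.SpecialLinearGroup (Fin 2) (ZMod p)))) = Pset u ![1, 0] := by
    ext x
    simp only [Set.mem_smul_set, SetLike.mem_coe, Subgroup.mem_zpowers_iff, smul_eq_mul]
    constructor
    · rintro ⟨y, ⟨m, rfl⟩, rfl⟩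
      rw [memP]
      rw [Matrix.SpecialLinearGroup.coe_mul, coe_T_zpow, hD]
      constructor <;> simp [Matrix.mul_apply, Fin.sum_univ_two]
    · intro hx
      obtain ⟨ha, hb⟩ := (memP x).mp hx
      have hc := h11 x ha hb
      refine ⟨T ^ ((((u⁻¹ * (x : Matrix (Fin 2) (Fin 2) (ZMod p)) 0 1).val : ℕ) : ℤ)),
        ⟨_, rfl⟩, ?_⟩
      apply Subtype.coe_inj.mp
      show ((D * _ : Matrix.SpecialLinearGroup (Fin 2) (ZMod p)) :
        Matrix (Fin 2) (Fin 2) (ZMod p)) = _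
      rw [Matrix.SpecialLinearGroup.coe_mul, coe_T_zpow, hD]
      have hval : ((((u⁻¹ * (x : Matrix (Fin 2) (Fin 2) (ZMod p)) 0 1).val : ℕ) : ℤ) : ZMod p)
          = u⁻¹ * (x : Matrix (Fin 2) (Fin 2) (ZMod p)) 0 1 := by
        push_cast
        exact ZMod.natCast_rightInverse _
      rw [hval]
      ext i j
      fin_cases i <;> fin_cases j <;>
        simp [Matrix.mul_apply, Fin.sum_univ_two, ha, hb, hc] <;>
        linear_combination (x : Matrix (Fin 2) (Fin 2) (ZMod p)) 0 1 * huinv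
  have hconj : ∀ g : Matrix.SpecialLinearGroup (Fin 2) (ZMod p),
      (fun x => g * x * g⁻¹) ''
          (D • ((Subgroup.zpowers T : Subgroup _) :
            Set (Matrix.SpecialLinearGroup (Fin 2) (ZMod p))))
        = Pset u ((g : Matrix (Fin 2) (Fin 2) (ZMod p)) *ᵥ ![1, 0]) := by
    intro g
    rw [hS, conj_Pset]
  have hDS : D ∈ Pset u ![1, 0] := by
    rw [memP, hD]
    constructor <;> simp
  constructor
  · ext x
    simp only [Set.mem_setOf_eq, Set.mem_iUnion, Set.mem_image]
    constructor
    · intro h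
      obtain ⟨c, hc⟩ := isConj_iff.mp h
      exact ⟨c, D, hS ▸ hDS, hc⟩
    · rintro ⟨g, y, hyS, rfl⟩
      obtain ⟨ha, hb⟩ := (memP y).mp (hS ▸ hyS)
      have hcc := h11 y ha hb
      set b := (y : Matrix (Fin 2) (Fin 2) (ZMod p)) 0 1 with hbdef
      set c := b * (u⁻¹ - u)⁻¹ with hcdef
      have hdetc : (!![1, c; 0, 1] : Matrix (Fin 2) (Fin 2) (ZMod p)).det = 1 := by
        rw [det_fin_two_of]; ring
      have hcb : c * u⁻¹ - u * c = b := by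
        calc c * u⁻¹ - u * c = b * ((u⁻¹ - u)⁻¹ * (u⁻¹ - u)) := by rw [hcdef]; ring
          _ = b := by rw [inv_mul_cancel₀ hne, mul_one]
      have key : IsConj D y := by
        refine isConj_iff.mpr ⟨(show Matrix.SpecialLinearGroup (Fin 2) (ZMod p) from ⟨!![1, c; 0, 1], hdetc⟩), ?_⟩
        apply Subtype.coe_inj.mp
        show ((_ * D * _ : Matrix.SpecialLinearGroup (Fin 2) (ZMod p)) :
          Matrix (Fin 2) (Fin 2) (ZMod p)) = _
        rw [Matrix.SpecialLinearGroup.coe_mul, Matrix.SpecialLinearGroup.coe_mul,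
          Matrix.SpecialLinearGroup.coe_inv, hD]
        show !![1, c; 0, 1] * !![u, 0; 0, u⁻¹] * (!![1, c; 0, 1]).adjugate = _
        rw [Matrix.adjugate_fin_two]
        ext i j
        fin_cases i <;> fin_cases j <;>
          simp [Matrix.mul_apply, Fin.sum_univ_two, ha, hb, hcc, ← hbdef] <;>
          linear_combination hcb
      exact key.trans (isConj_iff.mpr ⟨g, rfl⟩)
  · set f : Option (ZMod p) → Set (Matrix.SpecialLinearGroup (Fin 2) (ZMod p)) :=
      fun o => Option.elim o (Pset u ![1, 0]) (fun t => Pset u ![t, 1]) with hfdef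
    have hfinj : Function.Injective f := by
      rintro (_ | t) (_ | t') h
      · rfl
      · exact absurd h (Pset_sep hu0 hu2 (by norm_num))
      · exact absurd h (Pset_sep hu0 hu2 (by norm_num))
      · have : t = t' := by
          by_contra hne'
          exact Pset_sep hu0 hu2
            (show (![t, 1] : Fin 2 → ZMod p) 0 * (![t', 1] : Fin 2 → ZMod p) 1
                - (![t, 1] : Fin 2 → ZMod p) 1 * (![t', 1] : Fin 2 → ZMod p) 0 ≠ 0 by
              simpa [sub_ne_zero] using hne') h
        rw [this]
    have hrange : {A : Set (Matrix.SpecialLinearGroup (Fin 2) (ZMod p)) |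
          ∃ g : Matrix.SpecialLinearGroup (Fin 2) (ZMod p),
            A = (fun x => g * x * g⁻¹) ''
              (D • ((Subgroup.zpowers T : Subgroup _) :
                Set (Matrix.SpecialLinearGroup (Fin 2) (ZMod p))))}
        = Set.range f := by
      ext A
      simp only [Set.mem_setOf_eq, Set.mem_range]
      constructor
      · rintro ⟨g, rfl⟩
        rw [hconj g]
        set v := (g : Matrix (Fin 2) (Fin 2) (ZMod p)) *ᵥ ![1, 0] with hv
        have hv0 : v 0 = (g : Matrix (Fin 2) (Fin 2) (ZMod p)) 0 0 := by
          simp [hv, Matrix.mulVec, dotProduct, Fin.sum_univ_two]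
        have hv1 : v 1 = (g : Matrix (Fin 2) (Fin 2) (ZMod p)) 1 0 := by
          simp [hv, Matrix.mulVec, dotProduct, Fin.sum_univ_two]
        by_cases h1 : v 1 = 0
        · have hv00 : v 0 ≠ 0 := by
            intro h0
            have hdet := g.2
            rw [Matrix.det_fin_two, ← hv0, ← hv1, h0, h1] at hdet
            simp at hdet
          refine ⟨none, ?_⟩
          show Pset u ![1, 0] = Pset u v
          have hveq : v = v 0 • ![1, 0] := by
            funext i; fin_cases i <;> simp [h1]
          conv_rhs => rw [hveq]
          rw [Pset_smul hv00]
        · refine ⟨some (v 0 * (v 1)⁻¹), ?_⟩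
          show Pset u ![v 0 * (v 1)⁻¹, 1] = Pset u v
          have hveq : v = v 1 • ![v 0 * (v 1)⁻¹, 1] := by
            funext i
            fin_cases i
            · show v 0 = v 1 * (v 0 * (v 1)⁻¹)
              field_simp
            · show v 1 = v 1 * 1
              rw [mul_one]
          conv_rhs => rw [hveq]
          rw [Pset_smul h1]
      · rintro ⟨o, rfl⟩
        cases o with
        | none =>
          refine ⟨1, ?_⟩
          rw [hconj 1]
          show Pset u ![1, 0] = Pset u (((1 : Matrix.SpecialLinearGroup (Fin 2) (ZMod p)) :
            Matrix (Fin 2) (Fin 2) (ZMod p)) *ᵥ ![1, 0])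
          rw [Matrix.SpecialLinearGroup.coe_one, one_mulVec]
        | some t =>
          refine ⟨(show Matrix.SpecialLinearGroup (Fin 2) (ZMod p) from ⟨!![t, -1; 1, 0], by rw [det_fin_two_of]; ring⟩), ?_⟩
          rw [hconj _]
          show Pset u ![t, 1] = Pset u ((!![t, -1; 1, 0] : Matrix (Fin 2) (Fin 2) (ZMod p)) *ᵥ ![1, 0])
          have hveq : (!![t, -1; 1, 0] : Matrix (Fin 2) (Fin 2) (ZMod p)) *ᵥ ![1, 0] = ![t, 1] := by
            funext i; fin_cases i <;> simp [Matrix.mulVec, dotProduct, Fin.sum_univ_two]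
          rw [hveq]
    rw [hrange, ← Set.image_univ, Set.ncard_image_of_injective _ hfinj, Set.ncard_univ,
      Nat.card_eq_fintype_card, Fintype.card_option, ZMod.card]
end
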